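/- arXiv:2405.13584 — 4 statements merged into one kernel-verified Lean document; each statement's English description precedes it below -/
import Mathlib

section
/- Let E be a real normed vector space, let N be a nonempty finite index set, let g : N → E assign a vector (a gradient) to each index, and let S be a nonempty subset of N. Then there exists a weight function θ : S → ℕ with ∑_{j∈S} θ(j) = |N| such that ‖∑_{i∈N} g(i) − ∑_{j∈S} θ(j) • g(j)‖ ≤ ∑_{i∈N} min_{j∈S} ‖g(i) − g(j)‖. (This is Theorem 1 of the paper: the quantity DUB(S) = ∑_{i∈N} min_{j∈S} ‖g(i) − g(j)‖ upper-bounds the best weighted-subset approximation error of the full aggregated gradient.) -/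
/-!
Assign every client `i` a nearest selected client `n i ∈ S` and let `θ j` count the clients
assigned to `j`. Then `∑ j ∈ S, θ j • g j = ∑ i, g (n i)`, so the estimation error is
`‖∑ i, (g i - g (n i))‖`, which the triangle inequality bounds by
`∑ i, ‖g i - g (n i)‖ = DUB(S)`.
-/

open Finset

lemma Finset.sum_comp_eq_sum_card_fiber_nsmul {ι κ M : Type*} [AddCommMonoid M] [DecidableEq κ]
    {s : Finset ι} {t : Finset κ} {n : ι → κ} (hn : ∀ i ∈ s, n i ∈ t) (v : κ → M) :
    ∑ i ∈ s, v (n i) = ∑ j ∈ t, #{i ∈ s | n i = j} • v j := by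
  simp_rw [← sum_const, sum_fiberwise_of_maps_to' hn]

lemma norm_sum_sub_sum_card_fiber_nsmul_le {ι κ E : Type*} [SeminormedAddCommGroup E]
    [DecidableEq κ] {s : Finset ι} {t : Finset κ} {n : ι → κ} (hn : ∀ i ∈ s, n i ∈ t)
    (f : ι → E) (v : κ → E) :
    ‖∑ i ∈ s, f i - ∑ j ∈ t, #{i ∈ s | n i = j} • v j‖ ≤ ∑ i ∈ s, ‖f i - v (n i)‖ := by
  rw [← sum_comp_eq_sum_card_fiber_nsmul hn, ← sum_sub_distrib]
  exact norm_sum_le _ _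

theorem dub_upper_bound_general {E : Type*} [NormedAddCommGroup E]
    {ι : Type*} [Fintype ι] (g : ι → E) (S : Finset ι) (hS : S.Nonempty) :
    ∃ θ : ι → ℕ, (∑ j ∈ S, θ j) = Fintype.card ι ∧
      ‖(∑ i, g i) - ∑ j ∈ S, (θ j) • g j‖ ≤
        ∑ i, S.inf' hS (fun j => ‖g i - g j‖) := by
  classical
  choose nearest nearest_mem nearest_spec using
    fun i => S.exists_mem_eq_inf' hS fun j => ‖g i - g j‖
  have maps_to : ∀ i ∈ (univ : Finset ι), nearest i ∈ S := fun i _ => nearest_mem i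
  refine ⟨fun j => #{i | nearest i = j}, (card_eq_sum_card_fiberwise maps_to).symm, ?_⟩
  simpa only [nearest_spec] using norm_sum_sub_sum_card_fiber_nsmul_le maps_to g g

/-- Theorem 1 of the paper: DUB(S) = ∑_{i∈N} min_{j∈S} ‖g i − g j‖ upper-bounds the
best weighted-subset approximation error, with natural-number weights summing to |N|. -/
theorem dub_upper_bound {E : Type*} [NormedAddCommGroup E] [NormedSpace ℝ E]
    {ι : Type*} [Fintype ι] [Nonempty ι] (g : ι → E) (S : Finset ι) (hS : S.Nonempty) :
    ∃ θ : ι → ℕ, (∑ j ∈ S, θ j) = Fintype.card ι ∧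
      ‖(∑ i, g i) - ∑ j ∈ S, (θ j) • g j‖ ≤
        ∑ i, S.inf' hS (fun j => ‖g i - g j‖) :=
  dub_upper_bound_general g S hS
end

section
/- Let δ ≥ 0 and let x, y : ℕ → ℝ be two sequences. Define virtual queues Z, Q : ℕ → ℝ by Z(0) = Q(0) = 0, Z(t+1) = max(Z(t) + x(t) − y(t) − δ, 0), and Q(t+1) = max(Q(t) − x(t) + y(t) − δ, 0). If both Z(T)/T → 0 and Q(T)/T → 0 as T → ∞, then limsup_{T→∞} |(1/T) ∑_{t=0}^{T−1} (x(t) − y(t))| ≤ δ. -/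
open Finset Filter

/-!
Each queue dominates its cumulative drift: from `Z (t + 1) ≥ Z t + (x t - y t) - δ` and
`Z 0 = 0`, telescoping gives `∑_{t<T} (x t - y t) - T δ ≤ Z T`, and symmetrically
`-∑_{t<T} (x t - y t) - T δ ≤ Q T`. As both queues are nonnegative,
`|∑_{t<T} (x t - y t)| ≤ Z T + Q T + T δ`; dividing by `T`, the right-hand side tends to `δ`.
-/

lemma nonneg_of_eq_max_zero {Z w : ℕ → ℝ} (h0 : 0 ≤ Z 0) (h : ∀ t, Z (t + 1) = max (w t) 0) :
    ∀ T, 0 ≤ Z T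
  | 0 => h0
  | t + 1 => by rw [h t]; exact le_max_right _ _

lemma sum_sub_mul_le_sub_of_le_succ {Z a : ℕ → ℝ} {δ : ℝ} (h : ∀ t, Z t + a t - δ ≤ Z (t + 1))
    (T : ℕ) : ∑ t ∈ range T, a t - T * δ ≤ Z T - Z 0 := by
  calc ∑ t ∈ range T, a t - T * δ = ∑ t ∈ range T, (a t - δ) := by
        simp [sum_sub_distrib]
    _ ≤ ∑ t ∈ range T, (Z (t + 1) - Z t) := sum_le_sum fun t _ => by linarith [h t]
    _ = Z T - Z 0 := sum_range_sub Z T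

lemma limsup_abs_average_le {s u : ℕ → ℝ} {δ : ℝ} (hs : ∀ T, |s T| ≤ u T + T * δ)
    (hu : Tendsto (fun T : ℕ => u T / T) atTop (nhds 0)) :
    limsup (fun T : ℕ => |(1 / (T : ℝ)) * s T|) atTop ≤ δ := by
  have hbound : Tendsto (fun T : ℕ => u T / T + δ) atTop (nhds δ) := by
    simpa using hu.add_const δ
  have hle : ∀ᶠ T : ℕ in atTop, |(1 / (T : ℝ)) * s T| ≤ u T / T + δ := by
    filter_upwards [eventually_ge_atTop 1] with T hT
    have hT : (0 : ℝ) < T := by exact_mod_cast hT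
    calc |(1 / (T : ℝ)) * s T| = |s T| / T := by
          rw [abs_mul, abs_of_pos (one_div_pos.mpr hT), one_div_mul_eq_div]
      _ ≤ (u T + T * δ) / T := div_le_div_of_nonneg_right (hs T) hT.le
      _ = u T / T + δ := by field_simp
  calc limsup (fun T : ℕ => |(1 / (T : ℝ)) * s T|) atTop
      ≤ limsup (fun T : ℕ => u T / T + δ) atTop :=
        limsup_le_limsup hle (isCoboundedUnder_le_of_le atTop fun _ => abs_nonneg _)
          hbound.isBoundedUnder_le
    _ = δ := hbound.limsup_eq

theorem two_queue_stability_implies_two_sided_constraint_general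
    (δ : ℝ) (x y : ℕ → ℝ) (Z Q : ℕ → ℝ)
    (hZ0 : Z 0 = 0) (hQ0 : Q 0 = 0)
    (hZ : ∀ t, Z (t + 1) = max (Z t + x t - y t - δ) 0)
    (hQ : ∀ t, Q (t + 1) = max (Q t - x t + y t - δ) 0)
    (hZstable : Tendsto (fun T : ℕ => Z T / (T : ℝ)) atTop (nhds 0))
    (hQstable : Tendsto (fun T : ℕ => Q T / (T : ℝ)) atTop (nhds 0)) :
    Filter.limsup
      (fun T : ℕ => |(1 / (T : ℝ)) * ∑ t ∈ Finset.range T, (x t - y t)|) atTop ≤ δ := by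
  have hZnn := nonneg_of_eq_max_zero hZ0.ge hZ
  have hQnn := nonneg_of_eq_max_zero hQ0.ge hQ
  have hZdrift : ∀ T, ∑ t ∈ range T, (x t - y t) - T * δ ≤ Z T - Z 0 :=
    sum_sub_mul_le_sub_of_le_succ fun t => by
      rw [hZ t]; linarith [le_max_left (Z t + x t - y t - δ) 0]
  have hQdrift : ∀ T, ∑ t ∈ range T, -(x t - y t) - T * δ ≤ Q T - Q 0 :=
    sum_sub_mul_le_sub_of_le_succ fun t => by
      rw [hQ t]; linarith [le_max_left (Q t - x t + y t - δ) 0]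
  refine limsup_abs_average_le (u := Z + Q) (fun T => abs_le.mpr ⟨?_, ?_⟩) ?_
  · have := hQdrift T
    rw [sum_neg_distrib, hQ0] at this
    linarith [hZnn T, Pi.add_apply Z Q T]
  · have := hZdrift T
    rw [hZ0] at this
    linarith [hQnn T, Pi.add_apply Z Q T]
  · simpa [add_div] using hZstable.add hQstable

/-- Two-sided fairness constraint from two stable virtual queues:
if Z(T)/T → 0 and Q(T)/T → 0, then limsup |(1/T)∑ (x t − y t)| ≤ δ. -/
theorem two_queue_stability_implies_two_sided_constraint
    (δ : ℝ) (hδ : 0 ≤ δ) (x y : ℕ → ℝ) (Z Q : ℕ → ℝ)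
    (hZ0 : Z 0 = 0) (hQ0 : Q 0 = 0)
    (hZ : ∀ t, Z (t + 1) = max (Z t + x t - y t - δ) 0)
    (hQ : ∀ t, Q (t + 1) = max (Q t - x t + y t - δ) 0)
    (hZstable : Tendsto (fun T : ℕ => Z T / (T : ℝ)) atTop (nhds 0))
    (hQstable : Tendsto (fun T : ℕ => Q T / (T : ℝ)) atTop (nhds 0)) :
    Filter.limsup
      (fun T : ℕ => |(1 / (T : ℝ)) * ∑ t ∈ Finset.range T, (x t - y t)|) atTop ≤ δ :=
  two_queue_stability_implies_two_sided_constraint_general δ x y Z Q hZ0 hQ0 hZ hQ hZstable hQstable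
end

section
/- Let μ > 0, β > 1/μ, γ ≥ βμ, a ≥ 0, b ≥ 0, and let η(t) = β/(t + γ) for t ∈ ℕ. Let x : ℕ → ℝ be a sequence with x(t) ≥ 0 for all t satisfying x(t+1) ≤ (1 − μ·η(t))·x(t) + a·η(t)² + b·η(t) for all t ≥ 0. Define v = max{ a·β²/(β·μ − 1), γ·max(x(0) − b/μ, 0) }. Then for all t ∈ ℕ, x(t) ≤ v/(t + γ) + b/μ. In particular x(t) = O(1/t) + O(b). -/
/-! Substituting `y = x - b/μ` removes the bias term, because
`(1 - μη)x + bη = (1 - μη)(x - b/μ) + b/μ`. The shifted sequence satisfies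
`y(t+1) ≤ (1 - μη(t)) y(t) + aη(t)²`, and `y(t) ≤ v/(t+γ)` follows by induction: with `s = t+γ`,
the choice `aβ² ≤ v(βμ - 1)` makes the right-hand side at most `v(s-1)/s² ≤ v/(s+1)`. -/

theorem contraction_step_le_div_add_one {μ β a v s y : ℝ} (hs : β * μ ≤ s) (hs₀ : 0 < s)
    (hv₀ : 0 ≤ v) (hv : a * β ^ 2 ≤ v * (β * μ - 1)) (hy : y ≤ v / s) :
    (1 - μ * (β / s)) * y + a * (β / s) ^ 2 ≤ v / (s + 1) := by
  have hfactor : 0 ≤ 1 - μ * (β / s) := by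
    rw [sub_nonneg, mul_div_assoc', div_le_one hs₀]
    linarith
  calc (1 - μ * (β / s)) * y + a * (β / s) ^ 2
      ≤ (1 - μ * (β / s)) * (v / s) + a * (β / s) ^ 2 := by gcongr
    _ = (v * s - v * (β * μ) + a * β ^ 2) / s ^ 2 := by field_simp
    _ ≤ v * (s - 1) / s ^ 2 := by gcongr; linarith
    _ ≤ v / (s + 1) := by
      rw [div_le_div_iff₀ (by positivity) (by positivity)]
      nlinarith

theorem le_div_of_contraction_recursion {μ β γ a v : ℝ} {y : ℕ → ℝ} (hγ : β * μ ≤ γ)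
    (hγ₀ : 0 < γ) (hv₀ : 0 ≤ v) (hv : a * β ^ 2 ≤ v * (β * μ - 1)) (hy₀ : γ * y 0 ≤ v)
    (hrec : ∀ t : ℕ, y (t + 1) ≤
      (1 - μ * (β / ((t : ℝ) + γ))) * y t + a * (β / ((t : ℝ) + γ)) ^ 2) :
    ∀ t : ℕ, y t ≤ v / ((t : ℝ) + γ)
  | 0 => by
    rw [Nat.cast_zero, zero_add, le_div_iff₀ hγ₀]
    linarith
  | t + 1 => by
    have hs : β * μ ≤ (t : ℝ) + γ := by linarith [t.cast_nonneg (α := ℝ)]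
    have hs₀ : 0 < (t : ℝ) + γ := by positivity
    have hstep := contraction_step_le_div_add_one hs hs₀ hv₀ hv
      (le_div_of_contraction_recursion hγ hγ₀ hv₀ hv hy₀ hrec t)
    rw [Nat.cast_succ, add_right_comm]
    exact (hrec t).trans hstep

theorem recursion_convergence_rate_general
    (μ β γ a b : ℝ) (hμ : 0 < μ) (hβ : 1 / μ < β) (hγ : β * μ ≤ γ)
    (η : ℕ → ℝ) (hη : ∀ t : ℕ, η t = β / ((t : ℝ) + γ))
    (x : ℕ → ℝ)
    (hrec : ∀ t : ℕ, x (t + 1) ≤ (1 - μ * η t) * x t + a * (η t) ^ 2 + b * η t)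
    (v : ℝ) (hv : v = max (a * β ^ 2 / (β * μ - 1)) (γ * max (x 0 - b / μ) 0)) :
    ∀ t : ℕ, x t ≤ v / ((t : ℝ) + γ) + b / μ := by
  have hβμ : 0 < β * μ - 1 := by
    rw [div_lt_iff₀ hμ] at hβ
    linarith
  have hγ₀ : 0 < γ := by linarith
  have hv₀ : 0 ≤ v := hv ▸ le_max_of_le_right (by positivity)
  have hva : a * β ^ 2 ≤ v * (β * μ - 1) :=
    (div_le_iff₀ hβμ).mp (hv ▸ le_max_left _ _)
  have hv_init : γ * (x 0 - b / μ) ≤ v :=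
    hv ▸ le_max_of_le_right (mul_le_mul_of_nonneg_left (le_max_left _ _) hγ₀.le)
  have hshift : ∀ t : ℕ, x (t + 1) - b / μ ≤
      (1 - μ * (β / ((t : ℝ) + γ))) * (x t - b / μ) + a * (β / ((t : ℝ) + γ)) ^ 2 := by
    intro t
    have hbias : (1 - μ * η t) * x t + b * η t = (1 - μ * η t) * (x t - b / μ) + b / μ := by
      field_simp
      ring
    rw [← hη t]
    linarith [hrec t]
  intro t
  linarith [le_div_of_contraction_recursion (y := fun t => x t - b / μ) hγ hγ₀ hv₀ hva hv_init
    hshift t]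

/-- Sequence-recursion lemma underlying the convergence proof of Theorem 4:
a nonnegative sequence satisfying x(t+1) ≤ (1 − μη(t))x(t) + aη(t)² + bη(t) with
η(t) = β/(t+γ) obeys x(t) ≤ v/(t+γ) + b/μ, i.e. the rate O(1/t) + O(b). -/
theorem recursion_convergence_rate
    (μ β γ a b : ℝ) (hμ : 0 < μ) (hβ : 1 / μ < β) (hγ : β * μ ≤ γ)
    (ha : 0 ≤ a) (hb : 0 ≤ b)
    (η : ℕ → ℝ) (hη : ∀ t : ℕ, η t = β / ((t : ℝ) + γ))
    (x : ℕ → ℝ) (hx : ∀ t, 0 ≤ x t)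
    (hrec : ∀ t : ℕ, x (t + 1) ≤ (1 - μ * η t) * x t + a * (η t) ^ 2 + b * η t)
    (v : ℝ) (hv : v = max (a * β ^ 2 / (β * μ - 1)) (γ * max (x 0 - b / μ) 0)) :
    ∀ t : ℕ, x t ≤ v / ((t : ℝ) + γ) + b / μ :=
  recursion_convergence_rate_general μ β γ a b hμ hβ hγ η hη x hrec v hv
end

section
/- Let E and F be real normed vector spaces, N a nonempty finite index set, and S a nonempty subset of N. For each i ∈ N let g_i : E → F be an L-Lipschitz map (L ≥ 0), and let u, w : N → E be points with ‖u(i) − w(i)‖ ≤ D for all i ∈ N (D ≥ 0). Let θ : S → ℝ be nonnegative weights with ∑_{j∈S} θ(j) = |N|, and suppose ‖∑_{j∈S} θ(j) • g_j(w(j)) − ∑_{i∈N} g_i(w(i))‖ ≤ ρ for some ρ ≥ 0. Then ‖∑_{j∈S} θ(j) • g_j(u(j)) − ∑_{i∈N} g_i(u(i))‖ ≤ ρ + 2·|N|·L·D. -/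
open Finset

/-! The aggregation error `∑_{j∈S} θ j • g j (x j) - ∑_i g i (x i)` changes by the difference of
the two sums of increments `g i (u i) - g i (w i)`. Each increment has norm at most `L * D`, and
both the weights `θ` and the unit weights of the full sum add up to `|N|`, so each sum of
increments has norm at most `|N| * L * D`. -/

theorem norm_sum_smul_le_sum_mul {ι F : Type*} [SeminormedAddCommGroup F] [NormedSpace ℝ F]
    {s : Finset ι} {c : ι → ℝ} (hc : ∀ i ∈ s, 0 ≤ c i) {v : ι → F} {K : ℝ}
    (hv : ∀ i ∈ s, ‖v i‖ ≤ K) :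
    ‖∑ i ∈ s, c i • v i‖ ≤ (∑ i ∈ s, c i) * K := by
  rw [sum_mul]
  refine norm_sum_le_of_le s fun i hi => ?_
  rw [norm_smul, Real.norm_of_nonneg (hc i hi)]
  exact mul_le_mul_of_nonneg_left (hv i hi) (hc i hi)

theorem norm_sum_le_card_mul {ι F : Type*} [SeminormedAddCommGroup F] [NormedSpace ℝ F]
    {s : Finset ι} {v : ι → F} {K : ℝ} (hv : ∀ i ∈ s, ‖v i‖ ≤ K) :
    ‖∑ i ∈ s, v i‖ ≤ #s * K := by
  simpa using norm_sum_smul_le_sum_mul (c := fun _ => (1 : ℝ)) (fun _ _ => zero_le_one) hv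

theorem norm_sub_le_of_perturbation {F : Type*} [SeminormedAddCommGroup F]
    {a a' b b' : F} {ρ δ δ' : ℝ} (h : ‖a - b‖ ≤ ρ) (ha : ‖a' - a‖ ≤ δ) (hb : ‖b' - b‖ ≤ δ') :
    ‖a' - b'‖ ≤ ρ + δ + δ' := by
  calc ‖a' - b'‖ = ‖(a - b) + (a' - a) - (b' - b)‖ := by abel_nf
    _ ≤ ‖a - b‖ + ‖a' - a‖ + ‖b' - b‖ :=
        (norm_sub_le _ _).trans (by gcongr; exact norm_add_le _ _)
    _ ≤ ρ + δ + δ' := by gcongr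

theorem subset_gradient_approx_perturbation_general
    {E F : Type*} [NormedAddCommGroup E] [NormedSpace ℝ E]
    [NormedAddCommGroup F] [NormedSpace ℝ F]
    {ι : Type*} [Fintype ι]
    (S : Finset ι)
    (g : ι → E → F) (L : ℝ) (hL : 0 ≤ L)
    (hLip : ∀ i : ι, ∀ x y : E, ‖g i x - g i y‖ ≤ L * ‖x - y‖)
    (u w : ι → E) (D : ℝ)
    (huw : ∀ i, ‖u i - w i‖ ≤ D)
    (θ : ι → ℝ) (hθ : ∀ j, 0 ≤ θ j)
    (hθsum : (∑ j ∈ S, θ j) = (Fintype.card ι : ℝ))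
    (ρ : ℝ)
    (happrox : ‖(∑ j ∈ S, θ j • g j (w j)) - ∑ i, g i (w i)‖ ≤ ρ) :
    ‖(∑ j ∈ S, θ j • g j (u j)) - ∑ i, g i (u i)‖ ≤
      ρ + 2 * (Fintype.card ι : ℝ) * L * D := by
  have hstep : ∀ i, ‖g i (u i) - g i (w i)‖ ≤ L * D := fun i =>
    (hLip i _ _).trans (mul_le_mul_of_nonneg_left (huw i) hL)
  have hsubset : ‖∑ j ∈ S, θ j • g j (u j) - ∑ j ∈ S, θ j • g j (w j)‖ ≤
      Fintype.card ι * (L * D) := by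
    rw [← sum_sub_distrib, ← hθsum]
    simp_rw [← smul_sub]
    exact norm_sum_smul_le_sum_mul (fun j _ => hθ j) fun j _ => hstep j
  have hfull : ‖∑ i, g i (u i) - ∑ i, g i (w i)‖ ≤ Fintype.card ι * (L * D) := by
    rw [← sum_sub_distrib, ← card_univ]
    exact norm_sum_le_card_mul fun i _ => hstep i
  linarith [norm_sub_le_of_perturbation happrox hsubset hfull]

/-- Perturbation step in the convergence proof of Theorem 4: if the weighted subset
aggregation of the L-Lipschitz gradients approximates the full aggregation up to ρ at
points w, and u is a pointwise D-perturbation of w, then the approximation error at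
u is at most ρ + 2|N|LD. -/
theorem subset_gradient_approx_perturbation
    {E F : Type*} [NormedAddCommGroup E] [NormedSpace ℝ E]
    [NormedAddCommGroup F] [NormedSpace ℝ F]
    {ι : Type*} [Fintype ι] [Nonempty ι]
    (S : Finset ι) (hS : S.Nonempty)
    (g : ι → E → F) (L : ℝ) (hL : 0 ≤ L)
    (hLip : ∀ i : ι, ∀ x y : E, ‖g i x - g i y‖ ≤ L * ‖x - y‖)
    (u w : ι → E) (D : ℝ) (hD : 0 ≤ D)
    (huw : ∀ i, ‖u i - w i‖ ≤ D)
    (θ : ι → ℝ) (hθ : ∀ j, 0 ≤ θ j)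
    (hθsum : (∑ j ∈ S, θ j) = (Fintype.card ι : ℝ))
    (ρ : ℝ) (hρ : 0 ≤ ρ)
    (happrox : ‖(∑ j ∈ S, θ j • g j (w j)) - ∑ i, g i (w i)‖ ≤ ρ) :
    ‖(∑ j ∈ S, θ j • g j (u j)) - ∑ i, g i (u i)‖ ≤
      ρ + 2 * (Fintype.card ι : ℝ) * L * D :=
  subset_gradient_approx_perturbation_general S g L hL hLip u w D huw θ hθ hθsum ρ happrox
end
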